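/- arXiv:1806.03032 — 4 statements merged into one kernel-verified Lean document; each statement's English description precedes it below -/
import Mathlib

section
/- Let p, q be points of the unit sphere S² ⊂ ℝ³ with p ≠ q and ⟪p,q⟫ ≥ 0 (i.e. the geodesic distance is at most π/2), and let r = ‖p − q‖. Then cot(d(p,q)) > 1/r − 1. -/
open Real RealInnerProductSpace

/-! With `t = ⟪p, q⟫` the chord satisfies `r² = 2 - 2t`, and `cot d = t / √(1 - t²)`.
Since `1 - t² = (1 - t)(1 + t) ≤ 2(1 - t) = r²`, this is at least `t / r`; and
`t = 1 - r² / 2 > 1 - r` because `r < 2`. -/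

theorem Real.cot_arccos {t : ℝ} (ht₀ : -1 ≤ t) (ht₁ : t ≤ 1) :
    cot (arccos t) = t / √(1 - t ^ 2) := by
  rw [cot_eq_cos_div_sin, cos_arccos ht₀ ht₁, sin_arccos]

theorem Real.one_div_sub_one_lt_cot_arccos {t r : ℝ} (ht₀ : 0 ≤ t) (ht₁ : t < 1) (hr : 0 < r)
    (hr_sq : r ^ 2 = 2 - 2 * t) : 1 / r - 1 < cot (arccos t) := by
  have hr_lt_two : r < 2 := by nlinarith
  have hsin_pos : 0 < √(1 - t ^ 2) := sqrt_pos.mpr (by nlinarith)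
  have hsin_le : √(1 - t ^ 2) ≤ r := by
    rw [← sqrt_sq hr.le]
    exact sqrt_le_sqrt (by nlinarith)
  rw [cot_arccos (by linarith) ht₁.le]
  calc 1 / r - 1 = (1 - r) / r := by field_simp
    _ < t / r := by gcongr; nlinarith
    _ ≤ t / √(1 - t ^ 2) := by gcongr

theorem norm_sub_sq_eq_two_sub_two_inner_of_norm_eq_one {F : Type*} [NormedAddCommGroup F]
    [InnerProductSpace ℝ F] {x y : F} (hx : ‖x‖ = 1) (hy : ‖y‖ = 1) :
    ‖x - y‖ ^ 2 = 2 - 2 * ⟪x, y⟫ := by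
  rw [norm_sub_sq_real, hx, hy]
  ring

/-- For distinct points `p, q` on the unit sphere `S² ⊂ ℝ³` with `⟪p,q⟫ ≥ 0`
(geodesic distance at most `π/2`), and `r = ‖p - q‖` the chordal distance, the
cotangent of the geodesic distance `d(p,q) = arccos ⟪p,q⟫` satisfies
`cot (d(p,q)) > 1/r - 1`. -/
theorem cot_geodesic_gt (p q : EuclideanSpace ℝ (Fin 3))
    (hp : ‖p‖ = 1) (hq : ‖q‖ = 1) (hpq : p ≠ q) (hinner : 0 ≤ ⟪p, q⟫) :
    Real.cot (Real.arccos ⟪p, q⟫) > 1 / ‖p - q‖ - 1 :=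
  one_div_sub_one_lt_cot_arccos hinner ((inner_lt_one_iff_real_of_norm_eq_one hp hq).mpr hpq)
    (norm_pos_iff.mpr (sub_ne_zero.mpr hpq)) (norm_sub_sq_eq_two_sub_two_inner_of_norm_eq_one hp hq)
end

section
/- Let p, q be points of the unit sphere S² ⊂ ℝ³ with p ≠ q and p ≠ −q, and let r = ‖p − q‖. Then cot(d(p,q)) < 1/r. -/
/-!
With `t = ⟪p, q⟫` one has `cot d(p,q) = t / √(1 - t²)` and `‖p - q‖ = √(2 - 2t)`. For `t < 0` the
left side is not positive; for `0 ≤ t < 1` squaring reduces the claim to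
`1 - t² - t²(2 - 2t) = (1 - t)²(1 + 2t) > 0`.
-/

open Real RealInnerProductSpace

namespace Real

theorem cot_arccos_s2 (x : ℝ) : cot (arccos x) = x / √(1 - x ^ 2) := by
  rw [← tan_inv_eq_cot, tan_arccos, inv_div]

theorem cot_arccos_lt_one_div_sqrt {t : ℝ} (ht : t < 1) :
    cot (arccos t) < 1 / √(2 - 2 * t) := by
  have hr : 0 < √(2 - 2 * t) := sqrt_pos.2 (by linarith)
  rw [cot_arccos_s2]
  rcases lt_or_ge t 0 with hneg | hnonneg
  · calc t / √(1 - t ^ 2) ≤ 0 := div_nonpos_of_nonpos_of_nonneg hneg.le (sqrt_nonneg _)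
      _ < 1 / √(2 - 2 * t) := by positivity
  · have hs : 0 < √(1 - t ^ 2) := sqrt_pos.2 (by nlinarith)
    rw [div_lt_div_iff₀ hs hr, one_mul, lt_sqrt (by positivity), mul_pow, sq_sqrt (by linarith)]
    have hpos : 0 < (1 - t) ^ 2 * (1 + 2 * t) := by
      have : 0 < 1 - t := by linarith
      positivity
    linear_combination hpos

end Real

theorem norm_sub_eq_sqrt_two_sub_two_mul_inner {F : Type*} [NormedAddCommGroup F]
    [InnerProductSpace ℝ F] {x y : F} (hx : ‖x‖ = 1) (hy : ‖y‖ = 1) :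
    ‖x - y‖ = √(2 - 2 * ⟪x, y⟫) := by
  rw [← sqrt_sq (norm_nonneg _), norm_sub_sq_real, hx, hy]
  ring_nf

theorem cot_geodesic_lt_general (p q : EuclideanSpace ℝ (Fin 3))
    (hp : ‖p‖ = 1) (hq : ‖q‖ = 1) (hpq : p ≠ q) :
    Real.cot (Real.arccos ⟪p, q⟫) < 1 / ‖p - q‖ := by
  rw [norm_sub_eq_sqrt_two_sub_two_mul_inner hp hq]
  exact cot_arccos_lt_one_div_sqrt ((inner_lt_one_iff_real_of_norm_eq_one hp hq).2 hpq)

/-- For distinct, non-antipodal points `p, q` on the unit sphere `S² ⊂ ℝ³`, with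
`r = ‖p - q‖` the chordal distance, the cotangent of the geodesic distance
`d(p,q) = arccos ⟪p,q⟫` satisfies `cot (d(p,q)) < 1/r`. -/
theorem cot_geodesic_lt (p q : EuclideanSpace ℝ (Fin 3))
    (hp : ‖p‖ = 1) (hq : ‖q‖ = 1) (hpq : p ≠ q) (hpq' : p ≠ -q) :
    Real.cot (Real.arccos ⟪p, q⟫) < 1 / ‖p - q‖ :=
  cot_geodesic_lt_general p q hp hq hpq
end

section
/- For every real number t and every k ∈ {1, 2}: if sin(2πt) = sin(2π(t + k/3)), then sin(4πt) ≠ sin(4π(t + k/3)). -/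
open Real

/-!
Writing `a = 2πt` and `b = 2π(t + k/3)`, the doubled-angle formula turns `sin 2a = sin 2b` under
`sin a = sin b` into `sin b (cos a - cos b) = 0`, which is exactly `sin (b - a) = 0`. But
`b - a = 2πk/3` is not a multiple of `π` when `3 ∤ k`.
-/

theorem sin_sub_eq_zero_of_sin_eq_of_sin_two_mul_eq {a b : ℝ} (h₁ : sin a = sin b)
    (h₂ : sin (2 * a) = sin (2 * b)) : sin (b - a) = 0 := by
  rw [sin_two_mul, sin_two_mul, h₁] at h₂
  rw [sin_sub, h₁]
  linear_combination h₂ / 2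

theorem sin_two_pi_mul_div_three_ne_zero {k : ℤ} (hk : ¬ 3 ∣ k) :
    sin (2 * π * (k / 3)) ≠ 0 := by
  rw [Ne, sin_eq_zero_iff]
  rintro ⟨n, hn⟩
  have hn' : ((3 * n : ℤ) : ℝ) = ((2 * k : ℤ) : ℝ) := by
    push_cast
    have := pi_ne_zero
    field_simp at hn
    linear_combination hn
  have : 3 * n = 2 * k := by exact_mod_cast hn'
  omega

/-- For every real `t` and `k ∈ {1, 2}`: if `sin (2πt) = sin (2π(t + k/3))`,
then `sin (4πt) ≠ sin (4π(t + k/3))`. -/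
theorem sin_shift_incompatibility (t : ℝ) (k : ℕ) (hk : k = 1 ∨ k = 2)
    (h : Real.sin (2 * π * t) = Real.sin (2 * π * (t + k / 3))) :
    Real.sin (4 * π * t) ≠ Real.sin (4 * π * (t + k / 3)) := by
  intro h₂
  have hk3 : ¬ 3 ∣ (k : ℤ) := by omega
  have hsub := sin_sub_eq_zero_of_sin_eq_of_sin_two_mul_eq h (by convert h₂ using 2 <;> ring)
  refine sin_two_pi_mul_div_three_ne_zero hk3 ?_
  rw [← hsub]
  push_cast
  ring_nf
end

section
/- Define x(t) = 0.15·sin(4πt), y(t) = 0.2275·sin(2πt), z(t) = √(1 − x(t)² − y(t)²), and q(t) = (x(t), y(t), z(t)) ∈ ℝ³. Set q₁(t) = q(t), q₂(t) = q(t + 1/3), q₃(t) = q(t + 2/3). Then for every real t and all i ≠ j in {1,2,3}, q_i(t) ≠ q_j(t); that is, the test loop is collision-free. -/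
/-!
If two bodies collide then `q(s) = q(s + d)` with `d ∈ {±1/3, ±2/3}`. Equality of the `y`
coordinates gives `sin a = sin (a + c)` with `a = 2πs`, `c = 2πd`, i.e. `sin (c/2) cos (a + c/2) = 0`;
equality of the `x` coordinates gives `sin c · cos (2a + c) = 0`. If `sin c ≠ 0`, the first forces
`cos (a + c/2) = 0`, hence `cos (2a + c) = -1`, contradicting the second. So `sin (2πd) = 0`,
which fails for `d = m/3` with `3 ∤ m`.
-/

open Real

/-- First coordinate of the test loop: `x(t) = 0.15 sin (4πt)`. -/
noncomputable def xFun (t : ℝ) : ℝ := 0.15 * Real.sin (4 * π * t)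

/-- Second coordinate of the test loop: `y(t) = 0.2275 sin (2πt)`. -/
noncomputable def yFun (t : ℝ) : ℝ := 0.2275 * Real.sin (2 * π * t)

/-- Third coordinate of the test loop: `z(t) = √(1 - x(t)² - y(t)²)`. -/
noncomputable def zFun (t : ℝ) : ℝ := Real.sqrt (1 - xFun t ^ 2 - yFun t ^ 2)

/-- The test loop `q(t) = (x(t), y(t), z(t)) ∈ ℝ³`. -/
noncomputable def qFun (t : ℝ) : EuclideanSpace ℝ (Fin 3) :=
  (WithLp.equiv 2 (Fin 3 → ℝ)).symm ![xFun t, yFun t, zFun t]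

/-- The `i`-th body of the choreography: `qᵢ(t) = q(t + (i-1)/3)` for `i = 1, 2, 3`. -/
noncomputable def qBody (i : Fin 3) (t : ℝ) : EuclideanSpace ℝ (Fin 3) :=
  qFun (t + (i : ℝ) / 3)

theorem sin_eq_zero_of_sin_add_eq_of_sin_two_mul_add_eq {a c : ℝ} (h₁ : sin (a + c) = sin a)
    (h₂ : sin (2 * a + 2 * c) = sin (2 * a)) : sin c = 0 := by
  by_contra hc
  have hc₂ : sin (c / 2) ≠ 0 := by
    rintro h
    rw [show c = 2 * (c / 2) by ring, sin_two_mul, h] at hc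
    simp at hc
  have hcos : cos (a + c / 2) = 0 := by
    have := sin_sub_sin (a + c) a
    rw [h₁, show (a + c - a) / 2 = c / 2 by ring, show (a + c + a) / 2 = a + c / 2 by ring] at this
    simpa [hc₂] using this.symm
  have hcos₂ : cos (2 * a + c) = 0 := by
    have := sin_sub_sin (2 * a + 2 * c) (2 * a)
    rw [h₂, show (2 * a + 2 * c - 2 * a) / 2 = c by ring,
      show (2 * a + 2 * c + 2 * a) / 2 = 2 * a + c by ring] at this
    simpa [hc] using this.symm
  rw [show 2 * a + c = 2 * (a + c / 2) by ring, cos_two_mul, hcos] at hcos₂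
  norm_num at hcos₂

theorem sin_two_pi_mul_sub_eq_zero_of_qFun_eq {s s' : ℝ} (h : qFun s = qFun s') :
    sin (2 * π * (s' - s)) = 0 := by
  have hxyz : ![xFun s, yFun s, zFun s] = ![xFun s', yFun s', zFun s'] :=
    (WithLp.equiv 2 (Fin 3 → ℝ)).symm.injective h
  have hx : sin (4 * π * s') = sin (4 * π * s) := by
    simpa [xFun, show (0.15 : ℝ) ≠ 0 by norm_num] using (congrFun hxyz 0).symm
  have hy : sin (2 * π * s') = sin (2 * π * s) := by
    simpa [yFun, show (0.2275 : ℝ) ≠ 0 by norm_num] using (congrFun hxyz 1).symm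
  apply sin_eq_zero_of_sin_add_eq_of_sin_two_mul_add_eq (a := 2 * π * s)
  · convert hy using 2; ring
  · convert hx using 2 <;> ring

theorem sin_two_pi_mul_int_div_three_ne_zero {m : ℤ} (hm : ¬ (3 : ℤ) ∣ m) :
    sin (2 * π * (m / 3)) ≠ 0 := by
  intro h
  obtain ⟨n, hn⟩ := sin_eq_zero_iff.mp h
  have h3n : 3 * n = 2 * m := by
    have hπ := pi_pos.ne'
    field_simp at hn
    exact_mod_cast (by linarith : (3 * n : ℝ) = 2 * m)
  omega

/-- The test loop is collision-free: for every real `t` and all `i ≠ j` in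
`{1,2,3}`, `qᵢ(t) ≠ qⱼ(t)`. -/
theorem test_loop_collision_free (t : ℝ) (i j : Fin 3) (hij : i ≠ j) :
    qBody i t ≠ qBody j t := by
  intro h
  have hshift := sin_two_pi_mul_sub_eq_zero_of_qFun_eq h
  have hm : ¬ (3 : ℤ) ∣ (j : ℤ) - i := by omega
  refine sin_two_pi_mul_int_div_three_ne_zero hm ?_
  convert hshift using 2
  push_cast
  ring
end
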